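/- If 0 < α ≤ (1−σ²)²/(105·Q·L), then the spectral radius of G_α satisfies ρ(G_α) < 1. -/

import Mathlib

/-!
If `w > 0` and `v` is an eigenvector of `A` for `z`, then at a coordinate `k` maximizing
`|vⱼ| / wⱼ` the equation `z vₖ = ∑ⱼ Aₖⱼ vⱼ` gives `|z| wₖ ≤ ∑ⱼ |Aₖⱼ| wⱼ` (Gershgorin's theorem for
`diag(w)⁻¹ A diag(w)`). So `ρ(G_α) < 1` as soon as `G_α w < w` componentwise for some `w > 0`.
The diagonal entries of `G_α` fall short of `1` by `(1-σ²)/2 - O(α²)` and by `μα/2`; the weights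
`(μ²/(8L²), 1, 167L²/(1-σ²)²)` make the off-diagonal contributions of every row smaller than
this gap once `105 L² α ≤ (1-σ²)² μ`, which is the step-size condition.
-/

/-- The spectral radius of a real square matrix: the maximum modulus of its
complex eigenvalues. -/
noncomputable def specRad {d : ℕ} (A : Matrix (Fin d) (Fin d) ℝ) : ℝ :=
  sSup ((fun z : ℂ => ‖z‖) '' spectrum ℂ (A.map Complex.ofReal))

/-- The matrix `G_α` governing the inner-loop dynamics of GT-SVRG. -/
noncomputable def Gmat (L μ σ α : ℝ) : Matrix (Fin 3) (Fin 3) ℝ :=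
  !![(1 + σ ^ 2) / 2, 0, 2 * α ^ 2 / (1 - σ ^ 2);
     2 * L ^ 2 * α / μ, 1 - μ * α / 2, 0;
     100 * L ^ 2 / (1 - σ ^ 2), 70 * L ^ 2 / (1 - σ ^ 2),
       (1 + σ ^ 2) / 2 + 40 * L ^ 2 * α ^ 2 / (1 - σ ^ 2)]

theorem Matrix.norm_le_of_mem_spectrum_of_weighted_row_sum_le {K n : Type*} [NormedField K]
    [Fintype n] [DecidableEq n] {A : Matrix n n K} {w : n → ℝ} {r : ℝ}
    (hw : ∀ i, 0 < w i) (hrow : ∀ i, ∑ j, ‖A i j‖ * w j ≤ r * w i)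
    {z : K} (hz : z ∈ spectrum K A) : ‖z‖ ≤ r := by
  rw [← Matrix.spectrum_toLin', ← Module.End.hasEigenvalue_iff_mem_spectrum] at hz
  obtain ⟨v, hv, hv0⟩ := hz.exists_hasEigenvector
  obtain ⟨i, hi⟩ : ∃ i, v i ≠ 0 := by
    by_contra! h
    exact hv0 (funext h)
  have : Nonempty n := ⟨i⟩
  obtain ⟨k, hk⟩ := Finite.exists_max fun j => ‖v j‖ / w j
  have hvk : 0 < ‖v k‖ := by
    have := (div_pos (norm_pos_iff.2 hi) (hw i)).trans_le (hk i)
    exact (div_pos_iff_of_pos_right (hw k)).1 this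
  have hAv : ∑ j, A k j * v j = z * v k := congrFun (Module.End.mem_eigenspace_iff.1 hv) k
  refine le_of_mul_le_mul_right ?_ hvk
  calc ‖z‖ * ‖v k‖ = ‖∑ j, A k j * v j‖ := by rw [hAv, norm_mul]
    _ ≤ ∑ j, ‖A k j‖ * ‖v j‖ := (norm_sum_le _ _).trans_eq (by simp only [norm_mul])
    _ ≤ ∑ j, ‖A k j‖ * (w j * (‖v k‖ / w k)) := by
        gcongr with j
        exact (div_le_iff₀' (hw j)).1 (hk j)
    _ = (∑ j, ‖A k j‖ * w j) * (‖v k‖ / w k) := by simp only [← mul_assoc, Finset.sum_mul]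
    _ ≤ r * w k * (‖v k‖ / w k) := mul_le_mul_of_nonneg_right (hrow k) (div_nonneg hvk.le (hw k).le)
    _ = r * ‖v k‖ := by field_simp [(hw k).ne']

theorem specRad_le_of_weighted_row_sum_le {d : ℕ} {A : Matrix (Fin d) (Fin d) ℝ} {w : Fin d → ℝ}
    {r : ℝ} (hw : ∀ i, 0 < w i) (hr : 0 ≤ r) (hrow : ∀ i, ∑ j, |A i j| * w j ≤ r * w i) :
    specRad A ≤ r := by
  refine Real.sSup_le ?_ hr
  rintro _ ⟨z, hz, rfl⟩
  exact Matrix.norm_le_of_mem_spectrum_of_weighted_row_sum_le hw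
    (by simpa only [Matrix.map_apply, Complex.norm_real, Real.norm_eq_abs] using hrow) hz

theorem specRad_lt_one_of_weighted_row_sum_lt {d : ℕ} {A : Matrix (Fin d) (Fin d) ℝ}
    {w : Fin d → ℝ} (hw : ∀ i, 0 < w i) (hrow : ∀ i, ∑ j, |A i j| * w j < w i) :
    specRad A < 1 := by
  set ratios : Finset ℝ := insert 0 (Finset.univ.image fun i => (∑ j, |A i j| * w j) / w i)
  have hne : ratios.Nonempty := Finset.insert_nonempty _ _
  refine (specRad_le_of_weighted_row_sum_le hw (ratios.le_max' 0 (by simp [ratios]))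
    fun i => ?_).trans_lt ?_
  · rw [← div_le_iff₀ (hw i)]
    exact ratios.le_max' _ (by simp [ratios])
  · refine (Finset.max'_lt_iff _ hne).2 ?_
    simp only [ratios, Finset.mem_insert, Finset.mem_image, Finset.mem_univ, true_and]
    rintro _ (rfl | ⟨i, rfl⟩)
    · exact zero_lt_one
    · exact (div_lt_one (hw i)).2 (hrow i)

noncomputable def GmatWeight (L μ σ : ℝ) : Fin 3 → ℝ :=
  ![μ ^ 2 / (8 * L ^ 2), 1, 167 * L ^ 2 / (1 - σ ^ 2) ^ 2]

section Gmat

variable {L μ σ α : ℝ}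

lemma GmatWeight_pos (hL : 0 < L) (hμ : 0 < μ) (hσ : 0 < 1 - σ ^ 2) (i : Fin 3) :
    0 < GmatWeight L μ σ i := by
  fin_cases i <;>
    simp only [GmatWeight, Fin.zero_eta, Fin.mk_one, Fin.reduceFinMk, Matrix.cons_val,
      Matrix.cons_val_zero, Matrix.cons_val_one] <;>
    positivity

lemma Gmat_nonneg (hμ : 0 < μ) (hσ : 0 < 1 - σ ^ 2) (hα : 0 ≤ α) (hμα : μ * α ≤ 2) (i j : Fin 3) :
    0 ≤ Gmat L μ σ α i j := by
  fin_cases i <;> fin_cases j <;>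
    simp only [Gmat, Fin.zero_eta, Fin.mk_one, Fin.reduceFinMk, Matrix.of_apply, Matrix.cons_val',
      Matrix.cons_val, Matrix.cons_val_zero, Matrix.cons_val_one, Matrix.cons_val_fin_one] <;>
    first | positivity | linarith

lemma Gmat_row_zero (hL : 0 < L) (hσ : 0 < 1 - σ ^ 2) (hα : 0 < α)
    (hstep : 105 * L ^ 2 * α ≤ (1 - σ ^ 2) ^ 2 * μ) :
    ∑ j, Gmat L μ σ α 0 j * GmatWeight L μ σ j < GmatWeight L μ σ 0 := by
  simp only [Gmat, GmatWeight, Fin.sum_univ_three, Matrix.of_apply, Matrix.cons_val',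
    Matrix.cons_val, Matrix.cons_val_zero, Matrix.cons_val_one, Matrix.cons_val_fin_one,
    mul_one, add_zero]
  set s := 1 - σ ^ 2
  have hdiag : (1 + σ ^ 2) / 2 = 1 - s / 2 := by ring
  have hsq : 11025 * (L ^ 4 * α ^ 2) ≤ s ^ 4 * μ ^ 2 := by
    nlinarith [pow_le_pow_left₀ (by positivity) hstep 2]
  have hcoupling : 2 * α ^ 2 / s * (167 * L ^ 2 / s ^ 2) < s / 2 * (μ ^ 2 / (8 * L ^ 2)) := by
    rw [div_mul_div_comm, div_mul_div_comm, div_lt_div_iff₀ (by positivity) (by positivity)]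
    nlinarith [pow_pos (mul_pos hL hα) 2]
  rw [hdiag]
  linarith

lemma Gmat_row_one (hL : 0 < L) (hμ : 0 < μ) (hα : 0 < α) :
    ∑ j, Gmat L μ σ α 1 j * GmatWeight L μ σ j < GmatWeight L μ σ 1 := by
  simp only [Gmat, GmatWeight, Fin.sum_univ_three, Matrix.of_apply, Matrix.cons_val',
    Matrix.cons_val, Matrix.cons_val_zero, Matrix.cons_val_one, Matrix.cons_val_fin_one,
    mul_one]
  have hcoupling : 2 * L ^ 2 * α / μ * (μ ^ 2 / (8 * L ^ 2)) = μ * α / 4 := by field_simp; ring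
  rw [hcoupling]
  linarith [mul_pos hμ hα]

lemma Gmat_row_two (hμ : 0 < μ) (hμL : μ ≤ L) (hσ : 0 < 1 - σ ^ 2) (hα : 0 < α)
    (hstep : 105 * L ^ 2 * α ≤ (1 - σ ^ 2) ^ 2 * μ) :
    ∑ j, Gmat L μ σ α 2 j * GmatWeight L μ σ j < GmatWeight L μ σ 2 := by
  simp only [Gmat, GmatWeight, Fin.sum_univ_three, Matrix.of_apply, Matrix.cons_val',
    Matrix.cons_val, Matrix.cons_val_zero, Matrix.cons_val_one, Matrix.cons_val_fin_one,
    mul_one]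
  have hL : 0 < L := hμ.trans_le hμL
  have hs1 : 1 - σ ^ 2 ≤ 1 := sub_le_self _ (sq_nonneg σ)
  set s := 1 - σ ^ 2
  have hdiag : (1 + σ ^ 2) / 2 = 1 - s / 2 := by ring
  have hLα : 105 * L * α ≤ s ^ 2 := by nlinarith
  have hsq : 11025 * (L ^ 2 * α ^ 2) ≤ s ^ 2 := by
    nlinarith [pow_le_pow_left₀ (by positivity) hLα 2,
      pow_le_pow_of_le_one hσ.le hs1 (by norm_num : 2 ≤ 4)]
  have hμ2 : s ^ 2 * μ ^ 2 ≤ s ^ 2 * L ^ 2 := by gcongr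
  rw [hdiag]
  field_simp
  nlinarith [mul_le_mul_of_nonneg_left hsq (sq_nonneg L), mul_pos (pow_pos hσ 2) (pow_pos hL 2)]

lemma Gmat_weighted_row_sum_lt (hμ : 0 < μ) (hμL : μ ≤ L) (hσ : 0 < 1 - σ ^ 2) (hα : 0 < α)
    (hstep : 105 * L ^ 2 * α ≤ (1 - σ ^ 2) ^ 2 * μ) (i : Fin 3) :
    ∑ j, |Gmat L μ σ α i j| * GmatWeight L μ σ j < GmatWeight L μ σ i := by
  have hL : 0 < L := hμ.trans_le hμL
  have hμα : μ * α ≤ 2 := by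
    have hs1 : (1 - σ ^ 2) ^ 2 ≤ 1 := pow_le_one₀ hσ.le (by nlinarith)
    nlinarith [mul_le_mul_of_nonneg_left hstep hμ.le, mul_le_mul hμL hμL hμ.le hL.le]
  simp only [abs_of_nonneg (Gmat_nonneg hμ hσ hα.le hμα _ _)]
  fin_cases i
  exacts [Gmat_row_zero hL hσ hα hstep, Gmat_row_one hL hμ hα,
    Gmat_row_two hμ hμL hσ hα hstep]

end Gmat

theorem specRad_Gmat_lt_one (L μ σ α : ℝ)
    (hμ : 0 < μ) (hμL : μ ≤ L) (hσ0 : 0 < σ) (hσ1 : σ < 1)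
    (hα0 : 0 < α) (hα : α ≤ (1 - σ ^ 2) ^ 2 / (105 * (L / μ) * L)) :
    specRad (Gmat L μ σ α) < 1 := by
  have hL : 0 < L := hμ.trans_le hμL
  have hσ : 0 < 1 - σ ^ 2 := sub_pos.2 (pow_lt_one₀ hσ0.le hσ1 two_ne_zero)
  have hstep : 105 * L ^ 2 * α ≤ (1 - σ ^ 2) ^ 2 * μ := by
    rw [le_div_iff₀ (by positivity)] at hα
    calc 105 * L ^ 2 * α = α * (105 * (L / μ) * L) * μ := by field_simp
      _ ≤ (1 - σ ^ 2) ^ 2 * μ := mul_le_mul_of_nonneg_right hα hμ.le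
  exact specRad_lt_one_of_weighted_row_sum_lt (GmatWeight_pos hL hμ hσ)
    (Gmat_weighted_row_sum_lt hμ hμL hσ hα0 hstep)
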